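/- arXiv:1609.09331 — 3 statements merged into one kernel-verified Lean document; each statement's English description precedes it below -/
import Mathlib

section
/- Let Z be a discrete-time stationary stochastic process with mean zero and autocovariance γ(τ) = E[Z(t)Z(t+τ)]. Then the expected squared DFA fluctuation in any window equals E F_t^2(s) = γ(0) G(0,s)/s + (2/s) Σ_{j=1}^{s-1} G(j,s) γ(j), where G(j,s) = Σ_{k=1}^{s-j} a_{k,k+j} is the sum of the j-th superdiagonal of A = D^T(I-Q)D. In particular the expectation does not depend on the window index t. -/
/-!
Writing the fluctuation as the quadratic form `(1/s) Zᵀ A Z`, linearity of the integral gives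
`E F² = (1/s) ∑_{k,l} a_{kl} E[Z(t+1+k) Z(t+1+l)] = (1/s) ∑_{k,l} a_{kl} γ(|k - l|)`, which no longer
involves `t`. Grouping the terms by `|k - l|` and using the symmetry of `A = Dᵀ(I - Q)D` (the hat
matrix `Q` is symmetric) turns the two off-diagonal triangles into twice the superdiagonal sums.
-/

open MeasureTheory Finset Filter Matrix

noncomputable def dfaD (s : ℕ) : Matrix (Fin s) (Fin s) ℝ :=
  fun i j => if (j : ℕ) ≤ (i : ℕ) then 1 else 0

noncomputable def dfaB (m s : ℕ) : Matrix (Fin (m+1)) (Fin s) ℝ :=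
  fun k t => (((t : ℕ) + 1 : ℕ) : ℝ) ^ (k : ℕ)

noncomputable def dfaQ (m s : ℕ) : Matrix (Fin s) (Fin s) ℝ :=
  (dfaB m s)ᵀ * (dfaB m s * (dfaB m s)ᵀ)⁻¹ * dfaB m s

noncomputable def dfaA (m s : ℕ) : Matrix (Fin s) (Fin s) ℝ :=
  (dfaD s)ᵀ * (1 - dfaQ m s) * dfaD s

noncomputable def dfaG (m s j : ℕ) : ℝ :=
  ∑ k : Fin s, ∑ l : Fin s, if (l : ℕ) = (k : ℕ) + j then dfaA m s k l else 0

namespace Matrix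

theorem IsSymm.transpose_mul_mul {m n α : Type*} [Fintype m] [CommSemiring α]
    {M : Matrix m m α} (hM : M.IsSymm) (B : Matrix m n α) : (Bᵀ * M * B).IsSymm := by
  rw [IsSymm, transpose_mul, transpose_mul, transpose_transpose, hM.eq, Matrix.mul_assoc]

section Superdiagonal

variable {R : Type*} [CommSemiring R] {s : ℕ}

def superdiagSum (A : Matrix (Fin s) (Fin s) R) (j : ℕ) : R :=
  ∑ k : Fin s, ∑ l : Fin s, if (l : ℕ) = k + j then A k l else 0

theorem superdiagSum_mul (A : Matrix (Fin s) (Fin s) R) (j : ℕ) (c : R) :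
    superdiagSum A j * c = ∑ k : Fin s, ∑ l : Fin s, if (l : ℕ) = k + j then A k l * c else 0 := by
  simp only [superdiagSum, sum_mul, ite_mul, zero_mul]

theorem sum_upper_eq_sum_superdiagSum (A : Matrix (Fin s) (Fin s) R) (c : ℕ → R) :
    ∑ k : Fin s, ∑ l : Fin s, (if (k : ℕ) < l then A k l * c (l - k) else 0)
      = ∑ d ∈ range (s - 1), superdiagSum A (d + 1) * c (d + 1) := by
  have diag_of_lt (k l : Fin s) : (if (k : ℕ) < l then A k l * c (l - k) else 0)
      = ∑ d ∈ range (s - 1), if (l : ℕ) = k + (d + 1) then A k l * c (d + 1) else 0 := by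
    by_cases hkl : (k : ℕ) < l
    · rw [if_pos hkl, sum_eq_single_of_mem ((l : ℕ) - k - 1) (mem_range.2 (by omega))]
      · rw [if_pos (by omega), Nat.sub_add_cancel (by omega)]
      · intro d _ hd
        rw [if_neg (by omega)]
    · rw [if_neg hkl]
      exact (sum_eq_zero fun d _ => if_neg (by omega)).symm
  simp_rw [diag_of_lt, superdiagSum_mul, sum_comm (s := (univ : Finset (Fin s))) (t := range (s - 1))]

theorem sum_mul_dist_eq_superdiagSum {A : Matrix (Fin s) (Fin s) R} (hA : A.IsSymm)
    (c : ℕ → R) :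
    ∑ k : Fin s, ∑ l : Fin s, A k l * c (Nat.dist k l)
      = superdiagSum A 0 * c 0 + 2 * ∑ d ∈ range (s - 1), superdiagSum A (d + 1) * c (d + 1) := by
  have trichotomy (k l : Fin s) : A k l * c (Nat.dist k l)
      = (if (l : ℕ) = k + 0 then A k l * c 0 else 0)
        + (if (k : ℕ) < l then A k l * c (l - k) else 0)
        + (if (l : ℕ) < k then A l k * c (k - l) else 0) := by
    rcases lt_trichotomy (k : ℕ) l with h | h | h
    · simp [h, h.ne', Nat.dist_eq_sub_of_le h.le, h.not_gt]
    · simp [Fin.ext h, Nat.dist_self]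
    · simp [h, h.ne, Nat.dist_eq_sub_of_le_right h.le, h.not_gt, hA.apply]
  simp_rw [trichotomy, sum_add_distrib, ← superdiagSum_mul]
  rw [sum_comm (f := fun (k l : Fin s) => if (l : ℕ) < k then A l k * c (k - l) else 0),
    sum_upper_eq_sum_superdiagSum]
  ring

end Superdiagonal

end Matrix

theorem dfaQ_isSymm (m s : ℕ) : (dfaQ m s).IsSymm := by
  have gram_isSymm : (dfaB m s * (dfaB m s)ᵀ).IsSymm := by
    rw [IsSymm, transpose_mul, transpose_transpose]
  exact gram_isSymm.inv.transpose_mul_mul (dfaB m s)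

theorem dfaA_isSymm (m s : ℕ) : (dfaA m s).IsSymm :=
  (isSymm_one.sub (dfaQ_isSymm m s)).transpose_mul_mul (dfaD s)

section Covariance

variable {Ω : Type*} [MeasurableSpace Ω] {μ : Measure Ω}

theorem integral_mul_eq_of_stationary {Z : ℕ → Ω → ℝ} {γ : ℕ → ℝ}
    (hcov : ∀ t τ, ∫ ω, Z t ω * Z (t + τ) ω ∂μ = γ τ) (a b : ℕ) :
    ∫ ω, Z a ω * Z b ω ∂μ = γ (Nat.dist a b) := by
  rcases le_total a b with h | h
  · rw [Nat.dist_eq_sub_of_le h, ← hcov, Nat.add_sub_cancel' h]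
  · rw [Nat.dist_eq_sub_of_le_right h, ← hcov, Nat.add_sub_cancel' h]
    simp_rw [mul_comm]

theorem integral_quadraticForm {ι : Type*} [Fintype ι] (A : Matrix ι ι ℝ) {X : ι → Ω → ℝ}
    (hint : ∀ k l, Integrable (fun ω => X k ω * X l ω) μ) :
    ∫ ω, ∑ k, ∑ l, A k l * X k ω * X l ω ∂μ = ∑ k, ∑ l, A k l * ∫ ω, X k ω * X l ω ∂μ := by
  have hterm (k l : ι) : Integrable (fun ω => A k l * X k ω * X l ω) μ := by
    simpa only [mul_assoc] using (hint k l).const_mul (A k l)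
  rw [integral_finsetSum _ fun k _ => integrable_finsetSum _ fun l _ => hterm k l]
  refine sum_congr rfl fun k _ => ?_
  rw [integral_finsetSum _ fun l _ => hterm k l]
  simp only [mul_assoc, integral_const_mul]

end Covariance

theorem dfa_expectation_acvf_general {Ω : Type*} [MeasurableSpace Ω] (μ : Measure Ω)
    (m s : ℕ)
    (Z : ℕ → Ω → ℝ) (γ : ℕ → ℝ)
    (hint : ∀ t u, Integrable (fun ω => Z t ω * Z u ω) μ)
    (hcov : ∀ t τ, ∫ ω, Z t ω * Z (t + τ) ω ∂μ = γ τ)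
    (t : ℕ) :
    ∫ ω, (1/(s:ℝ)) * ∑ k : Fin s, ∑ j : Fin s,
        dfaA m s k j * Z (t + 1 + (k:ℕ)) ω * Z (t + 1 + (j:ℕ)) ω ∂μ
      = γ 0 * dfaG m s 0 / s
        + (2/(s:ℝ)) * ∑ j ∈ Finset.range (s - 1), dfaG m s (j+1) * γ (j+1) := by
  rw [integral_const_mul, integral_quadraticForm _ fun k l => hint _ _]
  simp_rw [integral_mul_eq_of_stationary hcov, Nat.dist_add_add_left]
  rw [sum_mul_dist_eq_superdiagSum (dfaA_isSymm m s)]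
  simp only [dfaG, superdiagSum]
  ring

theorem dfa_expectation_acvf {Ω : Type*} [MeasurableSpace Ω] (μ : Measure Ω)
    [IsProbabilityMeasure μ] (m s : ℕ) (hs : m + 1 ≤ s)
    (Z : ℕ → Ω → ℝ) (γ : ℕ → ℝ)
    (hmean : ∀ t, ∫ ω, Z t ω ∂μ = 0)
    (hint : ∀ t u, Integrable (fun ω => Z t ω * Z u ω) μ)
    (hcov : ∀ t τ, ∫ ω, Z t ω * Z (t + τ) ω ∂μ = γ τ)
    (t : ℕ) :
    ∫ ω, (1/(s:ℝ)) * ∑ k : Fin s, ∑ j : Fin s,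
        dfaA m s k j * Z (t + 1 + (k:ℕ)) ω * Z (t + 1 + (j:ℕ)) ω ∂μ
      = γ 0 * dfaG m s 0 / s
        + (2/(s:ℝ)) * ∑ j ∈ Finset.range (s - 1), dfaG m s (j+1) * γ (j+1) :=
  dfa_expectation_acvf_general μ m s Z γ hint hcov t
end

section
/- For DFA of order m = 1, the superdiagonal weight function is G(j,s) = (j-s-1)(j-s)(j-s+1)(3j^2 + 9js - 2s^2 + 8) / (30 s (s^2 - 1)) for 0 ≤ j ≤ s-1. -/
open MeasureTheory Finset Filter Matrix

/-!
For linear regression on the points `x_t = t + 1` the hat matrix is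
`Q = 𝟙𝟙ᵀ / s + v vᵀ / ∑ v_t²`, where `v = x - x̄` are the centred points and
`∑ v_t² = s (s² - 1) / 12`. Since `Dᵀ (x yᵀ) D = (Dᵀ x) (Dᵀ y)ᵀ` and `Dᵀ` takes tail sums, which
are `s - k` for `𝟙` and `k (s - k) / 2` for `v`, and since `(Dᵀ D)_{kl} = s - max k l`, every
entry of `A` is an explicit rational function of `k`, `l`, `s`. Along the `j`-th superdiagonal
it is a quartic polynomial in `k` divided by `s (s² - 1)`, and summing it with the power sums
of `k` gives the closed form.
-/

lemma natCast_sq_sub_one_ne_zero {s : ℕ} (hs : 2 ≤ s) : (s : ℝ) ^ 2 - 1 ≠ 0 := by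
  have : (2 : ℝ) ≤ s := by exact_mod_cast hs
  nlinarith

lemma sum_range_natCast_sub (n : ℕ) (c : ℝ) :
    ∑ p ∈ range n, ((p : ℝ) - c) = (n : ℝ) * (n - 1) / 2 - n * c := by
  induction n with
  | zero => simp
  | succ n ih => rw [sum_range_succ, ih]; push_cast; ring

lemma sum_range_natCast_add_one (n : ℕ) :
    ∑ t ∈ range n, ((t : ℝ) + 1) = (n : ℝ) * (n + 1) / 2 := by
  induction n with
  | zero => simp
  | succ n ih => rw [sum_range_succ, ih]; push_cast; ring

lemma sum_range_natCast_add_one_sq (n : ℕ) :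
    ∑ t ∈ range n, ((t : ℝ) + 1) ^ 2 = (n : ℝ) * (n + 1) * (2 * n + 1) / 6 := by
  induction n with
  | zero => simp
  | succ n ih => rw [sum_range_succ, ih]; push_cast; ring

lemma sum_range_mul_sub_mul_quadratic (m : ℕ) (c : ℝ) :
    ∑ k ∈ range m, (k : ℝ) * (m - k) * (3 * k ^ 2 - 3 * m * k + c)
      = m * ((m : ℝ) ^ 2 - 1) * (5 * c - 3 * m ^ 2 - 3) / 30 := by
  -- the summand is `-3 k⁴ + 6 m k³ - (3 m² + c) k² + c m k`; these are Faulhaber's sums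
  have h (n : ℕ) : ∑ k ∈ range n, (k : ℝ) * (m - k) * (3 * k ^ 2 - 3 * m * k + c)
      = -3 * ((n : ℝ) - 1) * n * (2 * n - 1) * (3 * n ^ 2 - 3 * n - 1) / 30
        + 6 * m * (n * ((n : ℝ) - 1) / 2) ^ 2
        - (3 * m ^ 2 + c) * ((n : ℝ) - 1) * n * (2 * n - 1) / 6
        + c * m * (n * ((n : ℝ) - 1) / 2) := by
    induction n with
    | zero => simp
    | succ n ih => rw [sum_range_succ, ih]; push_cast; ring
  rw [h]
  ring

lemma sum_superdiagonal {R : Type*} [AddCommMonoid R] (f : ℕ → ℕ → R) (s j : ℕ) :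
    ∑ k : Fin s, ∑ l : Fin s, (if (l : ℕ) = k + j then f k l else 0)
      = ∑ k ∈ range (s - j), f k (k + j) := by
  have inner (k : ℕ) : ∑ l : Fin s, (if (l : ℕ) = k + j then f k l else 0)
      = if k + j < s then f k (k + j) else 0 := by
    rw [Fin.sum_univ_eq_sum_range (fun l => if l = k + j then f k l else 0), sum_ite_eq']
    simp only [mem_range]
  have diagonal : (range s).filter (fun k => k + j < s) = range (s - j) := by
    ext k; simp only [mem_filter, mem_range]; omega
  simp only [inner]
  rw [Fin.sum_univ_eq_sum_range (fun k => if k + j < s then f k (k + j) else 0), ← sum_filter,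
    diagonal]

section CumulativeSums

variable {s : ℕ}

lemma vecMul_dfaD_apply (x : Fin s → ℝ) (l : Fin s) : (x ᵥ* dfaD s) l = ∑ p ∈ Ici l, x p := by
  simp [vecMul, dotProduct, dfaD, sum_ite, filter_le_eq_Ici]

lemma dfaD_transpose_mul_vecMulVec_mul (x y : Fin s → ℝ) :
    (dfaD s)ᵀ * vecMulVec x y * dfaD s = vecMulVec (x ᵥ* dfaD s) (y ᵥ* dfaD s) := by
  rw [mul_vecMulVec, vecMulVec_mul, mulVec_transpose]

lemma dfaD_transpose_mul_dfaD_apply (k l : Fin s) :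
    ((dfaD s)ᵀ * dfaD s) k l = (s : ℝ) - max (k : ℕ) l := by
  have h : ({i | (l : ℕ) ≤ i ∧ (k : ℕ) ≤ i} : Finset (Fin s)) = Ici (max k l) := by
    ext; simp [and_comm]
  simp only [mul_apply, transpose_apply, dfaD, ← ite_and, mul_ite, mul_one, mul_zero,
    sum_boole, h, Fin.card_Ici]
  rw [Nat.cast_sub (max k l).isLt.le, Fin.coe_max]

lemma one_vecMul_dfaD_apply (l : Fin s) : (1 ᵥ* dfaD s) l = (s : ℝ) - l := by
  simp [vecMul_dfaD_apply, Fin.card_Ici, Nat.cast_sub l.isLt.le]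

-- the sample points `t + 1` minus their mean `(s + 1) / 2`
noncomputable def centeredIndex (s : ℕ) (i : Fin s) : ℝ := (i : ℝ) - ((s : ℝ) - 1) / 2

lemma centeredIndex_vecMul_dfaD_apply (l : Fin s) :
    (centeredIndex s ᵥ* dfaD s) l = l * ((s : ℝ) - l) / 2 := by
  have h := sum_map (Ici l) Fin.valEmbedding (fun p : ℕ => (p : ℝ) - ((s : ℝ) - 1) / 2)
  rw [Fin.map_valEmbedding_Ici, sum_Ico_eq_sub _ l.isLt.le, sum_range_natCast_sub,
    sum_range_natCast_sub] at h
  simp only [vecMul_dfaD_apply, centeredIndex, Fin.valEmbedding_apply] at h ⊢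
  rw [← h]
  ring

end CumulativeSums

lemma dfaB_one_mul_transpose (s : ℕ) : dfaB 1 s * (dfaB 1 s)ᵀ
    = !![(s : ℝ), s * (s + 1) / 2; s * (s + 1) / 2, s * (s + 1) * (2 * s + 1) / 6] := by
  ext a b
  fin_cases a <;> fin_cases b <;>
    simp [mul_apply, dfaB, Fin.sum_univ_eq_sum_range (fun t => ((t : ℝ) + 1)),
      ← sq, Fin.sum_univ_eq_sum_range (fun t => ((t : ℝ) + 1) ^ 2),
      sum_range_natCast_add_one, sum_range_natCast_add_one_sq]

lemma dfaQ_one_eq {s : ℕ} (hs : 2 ≤ s) :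
    dfaQ 1 s = (s : ℝ)⁻¹ • vecMulVec 1 1
      + (12 / (s * ((s : ℝ) ^ 2 - 1))) • vecMulVec (centeredIndex s) (centeredIndex s) := by
  have h0 : (s : ℝ) ≠ 0 := Nat.cast_ne_zero.mpr (by omega)
  have h1 := natCast_sq_sub_one_ne_zero hs
  ext i p
  rw [dfaQ, dfaB_one_mul_transpose, Matrix.inv_def, adjugate_fin_two, det_fin_two_of,
    Ring.inverse_eq_inv']
  simp [mul_apply, Fin.sum_univ_two, dfaB, vecMulVec_apply, centeredIndex]
  rw [show (s : ℝ) * (s * (s + 1) * (2 * s + 1) / 6) - s * (s + 1) / 2 * (s * (s + 1) / 2)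
      = s ^ 2 * (s ^ 2 - 1) / 12 by ring]
  field_simp
  ring

-- indices counted from `0`, as for `Fin s`
noncomputable def dfaOneEntry (s k l : ℕ) : ℝ :=
  (s : ℝ) - max k l - ((s : ℝ) - k) * (s - l) / s
    - 3 * (k * ((s : ℝ) - k)) * (l * ((s : ℝ) - l)) / (s * ((s : ℝ) ^ 2 - 1))

lemma dfaA_one_apply {s : ℕ} (hs : 2 ≤ s) (k l : Fin s) : dfaA 1 s k l = dfaOneEntry s k l := by
  rw [dfaA, Matrix.mul_sub, Matrix.sub_mul, Matrix.mul_one, dfaQ_one_eq hs, Matrix.mul_add,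
    Matrix.add_mul, Matrix.mul_smul, Matrix.smul_mul, Matrix.mul_smul, Matrix.smul_mul,
    dfaD_transpose_mul_vecMulVec_mul, dfaD_transpose_mul_vecMulVec_mul]
  simp only [Matrix.sub_apply, Matrix.add_apply, Matrix.smul_apply, vecMulVec_apply,
    dfaD_transpose_mul_dfaD_apply, one_vecMul_dfaD_apply, centeredIndex_vecMul_dfaD_apply,
    smul_eq_mul, dfaOneEntry]
  ring

lemma dfaOneEntry_self_add {s : ℕ} (hs : 2 ≤ s) (k j : ℕ) :
    dfaOneEntry s k (k + j) = k * ((s : ℝ) - j - k)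
      * (3 * k ^ 2 - 3 * ((s : ℝ) - j) * k + ((s : ℝ) ^ 2 - 1 - 3 * j * s))
      / (s * ((s : ℝ) ^ 2 - 1)) := by
  have h0 : (s : ℝ) ≠ 0 := Nat.cast_ne_zero.mpr (by omega)
  have h1 := natCast_sq_sub_one_ne_zero hs
  rw [dfaOneEntry, max_eq_right (Nat.le_add_right k j)]
  field_simp
  push_cast
  ring

theorem dfa1_weight_function (s j : ℕ) (hs : 2 ≤ s) (hj : j ≤ s - 1) :
    dfaG 1 s j
      = (((j:ℝ) - s - 1) * ((j:ℝ) - s) * ((j:ℝ) - s + 1)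
          * (3 * (j:ℝ)^2 + 9 * (j:ℝ) * s - 2 * (s:ℝ)^2 + 8))
        / (30 * s * ((s:ℝ)^2 - 1)) := by
  have hjs : ((s - j : ℕ) : ℝ) = s - j := Nat.cast_sub (by omega)
  have h0 : (s : ℝ) ≠ 0 := Nat.cast_ne_zero.mpr (by omega)
  have h1 := natCast_sq_sub_one_ne_zero hs
  simp only [dfaG, dfaA_one_apply hs, sum_superdiagonal (dfaOneEntry s), dfaOneEntry_self_add hs,
    ← sum_div, ← hjs, sum_range_mul_sub_mul_quadratic]
  rw [hjs]
  field_simp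
  ring
end

section
/- Let X(t) = T(t) + Z(t) where T is a deterministic polynomial of degree q ≤ m-1 and Z is a mean-zero process. Then the DFA-m fluctuation function of X equals that of Z in expectation: E F_t^2(s)[X] = (1/s) Σ_{k,j=1}^s a_{kj} γ_Z(t+k, t+j), i.e. the polynomial trend contributes nothing. In particular Σ_{k,j} a_{kj} T(t+k)T(t+j) = 0 and the cross terms have zero expectation. -/
open MeasureTheory Finset Filter Matrix

/-! With `τ k = T (t + 1 + k)`, the trend enters only through `A τ`. The vector `D τ` holds the
partial sums of a polynomial of degree `q`, i.e. (Faulhaber) the values at `1, …, s` of a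
polynomial of degree `q + 1 ≤ m`; so it lies in the column space of `Bᵀ`, which `1 - Q`
annihilates (`B Bᵀ` is invertible since `B` contains a Vandermonde block). Hence `A τ = 0`,
which kills the trend–trend term, while the cross terms vanish because `Z` is centred. -/

def natPolyFunctions (d : ℕ) : Submodule ℝ (ℕ → ℝ) :=
  Submodule.span ℝ ((fun i (n : ℕ) => (n : ℝ) ^ i) '' Set.Iic d)

namespace natPolyFunctions

lemma pow_mem {i d : ℕ} (h : i ≤ d) : (fun n : ℕ => (n : ℝ) ^ i) ∈ natPolyFunctions d :=
  Submodule.subset_span ⟨i, h, rfl⟩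

lemma mono {d e : ℕ} (h : d ≤ e) : natPolyFunctions d ≤ natPolyFunctions e :=
  Submodule.span_mono (Set.image_mono (Set.Iic_subset_Iic.2 h))

lemma sum_mul_pow_mem (β : ℕ → ℝ) (d : ℕ) :
    (fun n : ℕ => ∑ i ∈ range (d + 1), β i * (n : ℝ) ^ i) ∈ natPolyFunctions d := by
  have hsum : (fun n : ℕ => ∑ i ∈ range (d + 1), β i * (n : ℝ) ^ i) =
      ∑ i ∈ range (d + 1), β i • fun n : ℕ => (n : ℝ) ^ i := by
    ext n
    simp [Finset.sum_apply]
  rw [hsum]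
  exact Submodule.sum_mem _ fun i hi =>
    Submodule.smul_mem _ _ (pow_mem (Nat.lt_succ_iff.1 (mem_range.1 hi)))

lemma comp_add_mem {f : ℕ → ℝ} {d : ℕ} (hf : f ∈ natPolyFunctions d) (a : ℕ) :
    (fun n => f (n + a)) ∈ natPolyFunctions d := by
  let shift : (ℕ → ℝ) →ₗ[ℝ] (ℕ → ℝ) := LinearMap.funLeft ℝ ℝ (· + a)
  suffices natPolyFunctions d ≤ (natPolyFunctions d).comap shift from this hf
  refine Submodule.span_le.2 ?_
  rintro _ ⟨i, hi, rfl⟩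
  have binomial : (fun n : ℕ => ((n + a : ℕ) : ℝ) ^ i) = fun n : ℕ =>
      ∑ k ∈ range (i + 1), ((a : ℝ) ^ (i - k) * i.choose k) * (n : ℝ) ^ k := by
    ext n
    rw [Nat.cast_add, add_pow]
    exact Finset.sum_congr rfl fun k _ => by ring
  change (fun n : ℕ => ((n + a : ℕ) : ℝ) ^ i) ∈ natPolyFunctions d
  rw [binomial]
  exact mono hi (sum_mul_pow_mem _ i)

lemma sum_range_pow_mem (p : ℕ) :
    (fun n => ∑ k ∈ range n, (k : ℝ) ^ p) ∈ natPolyFunctions (p + 1) := by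
  have faulhaber : (fun n => ∑ k ∈ range n, (k : ℝ) ^ p) =
      ∑ i ∈ range (p + 1), ((bernoulli i * (p + 1).choose i / (p + 1) : ℚ) : ℝ) •
        fun n : ℕ => (n : ℝ) ^ (p + 1 - i) := by
    ext n
    have := congrArg (fun x : ℚ => (x : ℝ)) (sum_range_pow n p)
    push_cast at this
    rw [this, Finset.sum_apply]
    refine Finset.sum_congr rfl fun i _ => ?_
    simp only [Pi.smul_apply, smul_eq_mul]
    push_cast
    ring
  rw [faulhaber]
  exact Submodule.sum_mem _ fun i _ => Submodule.smul_mem _ _ (pow_mem (Nat.sub_le _ _))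

lemma sum_range_mem {f : ℕ → ℝ} {d : ℕ} (hf : f ∈ natPolyFunctions d) :
    (fun n => ∑ u ∈ range n, f u) ∈ natPolyFunctions (d + 1) := by
  let partialSum : (ℕ → ℝ) →ₗ[ℝ] (ℕ → ℝ) :=
    { toFun := fun f n => ∑ u ∈ range n, f u
      map_add' := fun f g => by ext n; simp [Finset.sum_add_distrib]
      map_smul' := fun c f => by ext n; simp [Finset.mul_sum] }
  suffices natPolyFunctions d ≤ (natPolyFunctions (d + 1)).comap partialSum from this hf
  refine Submodule.span_le.2 ?_
  rintro _ ⟨i, hi, rfl⟩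
  exact mono (Nat.succ_le_succ hi) (sum_range_pow_mem i)

end natPolyFunctions

lemma one_sub_transpose_mul_inv_mul_mul_transpose {ι κ R : Type*} [Fintype ι] [Fintype κ]
    [DecidableEq ι] [DecidableEq κ] [CommRing R] (B : Matrix κ ι R)
    (h : IsUnit (B * Bᵀ).det) :
    (1 - Bᵀ * (B * Bᵀ)⁻¹ * B) * Bᵀ = 0 := by
  rw [Matrix.sub_mul, Matrix.one_mul, Matrix.mul_assoc, Matrix.mul_assoc,
    Matrix.nonsing_inv_mul _ h, Matrix.mul_one, sub_self]

lemma dfaB_vecMul_injective {m s : ℕ} (hs : m + 1 ≤ s) :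
    Function.Injective (dfaB m s).vecMul := by
  intro x y hxy
  rw [← sub_eq_zero]
  refine Matrix.eq_zero_of_forall_index_sum_mul_pow_eq_zero
    (f := fun j : Fin (m + 1) => ((j : ℕ) : ℝ) + 1) (fun i j h => Fin.ext (by simpa using h))
    fun j => ?_
  have h : (x - y) ᵥ* dfaB m s = 0 := by rw [Matrix.sub_vecMul]; exact sub_eq_zero.2 hxy
  simpa [vecMul, dotProduct, dfaB] using congrFun h (Fin.castLE hs j)

lemma isUnit_det_dfaB_mul_transpose {m s : ℕ} (hs : m + 1 ≤ s) :
    IsUnit (dfaB m s * (dfaB m s)ᵀ).det := by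
  have h := (Matrix.PosDef.mul_conjTranspose_self _ (dfaB_vecMul_injective hs)).isUnit
  rw [conjTranspose_eq_transpose_of_trivial] at h
  exact (isUnit_iff_isUnit_det _).1 h

lemma one_sub_dfaQ_mulVec_eq_zero {m s : ℕ} (hs : m + 1 ≤ s) {f : ℕ → ℝ}
    (hf : f ∈ natPolyFunctions m) : (1 - dfaQ m s) *ᵥ (fun k : Fin s => f (k + 1)) = 0 := by
  let restrict : (ℕ → ℝ) →ₗ[ℝ] (Fin s → ℝ) :=
    LinearMap.funLeft ℝ ℝ fun k : Fin s => (k : ℕ) + 1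
  suffices natPolyFunctions m ≤ LinearMap.ker ((1 - dfaQ m s).mulVecLin ∘ₗ restrict) from
    this hf
  refine Submodule.span_le.2 ?_
  rintro _ ⟨i, hi, rfl⟩
  have hQ : (1 - dfaQ m s) * (dfaB m s)ᵀ = 0 :=
    one_sub_transpose_mul_inv_mul_mul_transpose _ (isUnit_det_dfaB_mul_transpose hs)
  -- the monomial `n ^ i` restricted to `1, …, s` is the `i`-th row of `dfaB`
  change (1 - dfaQ m s) *ᵥ (dfaB m s)ᵀ.col ⟨i, Nat.lt_succ_of_le hi⟩ = 0
  rw [← mulVec_single_one, mulVec_mulVec, hQ, zero_mulVec]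

lemma dfaD_mulVec_apply {s : ℕ} (f : ℕ → ℝ) (k : Fin s) :
    (dfaD s *ᵥ fun j : Fin s => f j) k = ∑ u ∈ range (k + 1), f u := by
  simp only [mulVec, dotProduct, dfaD, ite_mul, one_mul, zero_mul]
  rw [Fin.sum_univ_eq_sum_range (fun u => if u ≤ k then f u else 0), ← Finset.sum_filter]
  congr 1
  ext u
  simp only [mem_filter, mem_range]
  omega

lemma dfaA_mulVec_eq_zero {m s d : ℕ} (hs : m + 1 ≤ s) (hd : d + 1 ≤ m) {f : ℕ → ℝ}
    (hf : f ∈ natPolyFunctions d) : dfaA m s *ᵥ (fun k : Fin s => f k) = 0 := by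
  have hsum := natPolyFunctions.mono hd (natPolyFunctions.sum_range_mem hf)
  rw [dfaA, ← mulVec_mulVec, ← mulVec_mulVec, funext (dfaD_mulVec_apply f),
    one_sub_dfaQ_mulVec_eq_zero hs hsum, mulVec_zero]

lemma sum_sum_mul_mul_eq_dotProduct_mulVec {ι : Type*} [Fintype ι] (A : Matrix ι ι ℝ)
    (x y : ι → ℝ) : ∑ k, ∑ j, A k j * x k * y j = x ⬝ᵥ (A *ᵥ y) := by
  simp only [dotProduct, mulVec, Finset.mul_sum]
  exact Finset.sum_congr rfl fun k _ => Finset.sum_congr rfl fun j _ => by ring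

section Moments

variable {Ω : Type*} [MeasurableSpace Ω] {μ : Measure Ω}

lemma integral_sum_sum_const_mul {ι κ : Type*} [Fintype ι] [Fintype κ] (c : ι → κ → ℝ)
    {Y : ι → κ → Ω → ℝ} (hY : ∀ k j, Integrable (Y k j) μ) :
    ∫ ω, ∑ k, ∑ j, c k j * Y k j ω ∂μ =
      ∑ k, ∑ j, c k j * ∫ ω, Y k j ω ∂μ := by
  rw [integral_finsetSum _ fun k _ => integrable_finsetSum _ fun j _ => (hY k j).const_mul _]
  refine Finset.sum_congr rfl fun k _ => ?_
  rw [integral_finsetSum _ fun j _ => (hY k j).const_mul _]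
  simp only [integral_const_mul]

variable {U V : Ω → ℝ} (a b : ℝ)

lemma MeasureTheory.Integrable.const_add_mul_const_add [IsFiniteMeasure μ] (hU : Integrable U μ)
    (hV : Integrable V μ) (hUV : Integrable (fun ω => U ω * V ω) μ) :
    Integrable (fun ω => (a + U ω) * (b + V ω)) μ := by
  have h := (integrable_const (a * b)).add (((hV.const_mul a).add (hU.const_mul b)).add hUV)
  refine h.congr (ae_of_all _ fun ω => ?_)
  simp only [Pi.add_apply]
  ring

lemma integral_const_add_mul_const_add [IsProbabilityMeasure μ] (hU : Integrable U μ)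
    (hV : Integrable V μ) (hUV : Integrable (fun ω => U ω * V ω) μ)
    (hU₀ : ∫ ω, U ω ∂μ = 0) (hV₀ : ∫ ω, V ω ∂μ = 0) :
    ∫ ω, (a + U ω) * (b + V ω) ∂μ = a * b + ∫ ω, U ω * V ω ∂μ := by
  have hexpand : (fun ω => (a + U ω) * (b + V ω)) =
      fun ω => a * b + ((a * V ω + b * U ω) + U ω * V ω) := by
    ext ω
    ring
  have hlin : Integrable (fun ω => a * V ω + b * U ω) μ := (hV.const_mul a).add (hU.const_mul b)
  have hrest : Integrable (fun ω => a * V ω + b * U ω + U ω * V ω) μ := hlin.add hUV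
  rw [hexpand, integral_add (integrable_const _) hrest, integral_add hlin hUV,
    integral_add (hV.const_mul a) (hU.const_mul b)]
  simp [integral_const_mul, hU₀, hV₀]

end Moments

theorem dfa_polynomial_trend_invariance {Ω : Type*} [MeasurableSpace Ω] (μ : Measure Ω)
    [IsProbabilityMeasure μ] (m s q : ℕ) (hq : q + 1 ≤ m) (hs : m + 1 ≤ s)
    (β : ℕ → ℝ) (Z : ℕ → Ω → ℝ) (γZ : ℕ → ℕ → ℝ)
    (hZint : ∀ t, Integrable (Z t) μ)
    (hmean : ∀ t, ∫ ω, Z t ω ∂μ = 0)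
    (hint : ∀ t u, Integrable (fun ω => Z t ω * Z u ω) μ)
    (hcov : ∀ t u, ∫ ω, Z t ω * Z u ω ∂μ = γZ t u)
    (T : ℕ → ℝ) (hT : ∀ t : ℕ, T t = ∑ i ∈ Finset.range (q + 1), β i * (t:ℝ)^i)
    (X : ℕ → Ω → ℝ) (hX : ∀ t ω, X t ω = T t + Z t ω) (t : ℕ) :
    (∫ ω, (1/(s:ℝ)) * ∑ k : Fin s, ∑ j : Fin s,
        dfaA m s k j * X (t + 1 + (k:ℕ)) ω * X (t + 1 + (j:ℕ)) ω ∂μ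
      = (1/(s:ℝ)) * ∑ k : Fin s, ∑ j : Fin s,
          dfaA m s k j * γZ (t + 1 + (k:ℕ)) (t + 1 + (j:ℕ)))
    ∧ (∑ k : Fin s, ∑ j : Fin s,
        dfaA m s k j * T (t + 1 + (k:ℕ)) * T (t + 1 + (j:ℕ)) = 0)
    ∧ (∫ ω, ∑ k : Fin s, ∑ j : Fin s,
        dfaA m s k j * T (t + 1 + (k:ℕ)) * Z (t + 1 + (j:ℕ)) ω ∂μ = 0) := by
  have hTpoly : T ∈ natPolyFunctions q := by
    simpa only [← funext hT] using natPolyFunctions.sum_mul_pow_mem β q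
  have hTshift := natPolyFunctions.comp_add_mem hTpoly (t + 1)
  have hA : dfaA m s *ᵥ (fun k : Fin s => T (t + 1 + k)) = 0 := by
    simpa only [add_comm] using dfaA_mulVec_eq_zero hs hq hTshift
  have trend : ∑ k : Fin s, ∑ j : Fin s,
      dfaA m s k j * T (t + 1 + (k:ℕ)) * T (t + 1 + (j:ℕ)) = 0 := by
    rw [sum_sum_mul_mul_eq_dotProduct_mulVec, hA, dotProduct_zero]
  have hXX : ∀ a b, ∫ ω, X a ω * X b ω ∂μ = T a * T b + γZ a b := fun a b => by
    simp only [hX, ← hcov]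
    exact integral_const_add_mul_const_add _ _ (hZint a) (hZint b) (hint a b) (hmean a) (hmean b)
  have hXXint : ∀ a b, Integrable (fun ω => X a ω * X b ω) μ := fun a b => by
    simp only [hX]
    exact (hZint a).const_add_mul_const_add _ _ (hZint b) (hint a b)
  refine ⟨?_, trend, ?_⟩
  · simp only [integral_const_mul, mul_assoc]
    rw [integral_sum_sum_const_mul (fun k j => dfaA m s k j) fun k j => hXXint _ _]
    simp only [hXX, mul_add, Finset.sum_add_distrib, ← mul_assoc, trend, zero_add]
  · rw [integral_sum_sum_const_mul _ fun _ j => hZint _]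
    simp [hmean]
end
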